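/- Let B ∈ ℝ^{m×n} be a nonnegative matrix without zero rows or columns, and let x ∈ ℝ^n, y ∈ ℝ^m be positive vectors. Let R, C be diagonal matrices with Bx = Ry and yᵀB = xᵀC. Then for all S ⊆ [m] and T ⊆ [n]: |⟨χ_S, Bχ_T⟩ − ⟨χ_S,Bx⟩⟨y,Bχ_T⟩/⟨y,Bx⟩| ≤ σ₂(R^{-1/2}BC^{-1/2}) · sqrt( (‖R^{1/2}χ_S‖² − ⟨χ_S,Bx⟩²/⟨y,Bx⟩) · (‖C^{1/2}χ_T‖² − ⟨y,Bχ_T⟩²/⟨y,Bx⟩) ), where σ₂ denotes the second largest singular value. -/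

import Mathlib

/-
Put `M = R^{-1/2} B C^{-1/2}`, `u = R^{1/2} y` and `v = C^{1/2} x`. The defining relations of `R`
and `C` say exactly that `M v = u` and `Mᵀ u = v`; since `M` and `v` are positive, the Schur test
gives `‖M w‖ ≤ ‖w‖`, so `v` is an eigenvector of `MᵀM` for its top eigenvalue `1`, and on `v^⊥` the
quadratic form of `MᵀM` is bounded by `σ₂(M)²`. With `f = R^{1/2} χ_S` and `g = C^{1/2} χ_T`, the
left-hand side is `⟨f', M g'⟩` for the components `f' ⊥ u` and `g' ⊥ v` of `f` and `g`, and
Cauchy–Schwarz gives the bound, because `‖f'‖²` and `‖g'‖²` are the two factors under the root.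
-/

open Matrix Finset

theorem OrthonormalBasis.dotProduct_eq_sum {ι : Type*} [Fintype ι]
    (b : OrthonormalBasis ι ℝ (EuclideanSpace ℝ ι)) (x y : ι → ℝ) :
    x ⬝ᵥ y = ∑ k, (⇑(b k) ⬝ᵥ x) * (⇑(b k) ⬝ᵥ y) := by
  have h := b.sum_inner_mul_inner (WithLp.toLp 2 x) (WithLp.toLp 2 y)
  simp only [EuclideanSpace.inner_eq_star_dotProduct, star_trivial] at h
  simpa [dotProduct_comm] using h.symm

namespace Matrix.IsHermitian

variable {ι : Type*} [Fintype ι] [DecidableEq ι] {A : Matrix ι ι ℝ}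

theorem eigenvectorBasis_dotProduct_mulVec (hA : A.IsHermitian) (k : ι) (z : ι → ℝ) :
    ⇑(hA.eigenvectorBasis k) ⬝ᵥ (A *ᵥ z) =
      hA.eigenvalues k * (⇑(hA.eigenvectorBasis k) ⬝ᵥ z) := by
  rw [dotProduct_mulVec, ← mulVec_transpose, ← conjTranspose_eq_transpose_of_trivial, hA.eq,
    mulVec_eigenvectorBasis, smul_dotProduct, smul_eq_mul]

theorem dotProduct_mulVec_eq_sum (hA : A.IsHermitian) (w : ι → ℝ) :
    w ⬝ᵥ (A *ᵥ w) = ∑ k, hA.eigenvalues k * (⇑(hA.eigenvectorBasis k) ⬝ᵥ w) ^ 2 := by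
  rw [hA.eigenvectorBasis.dotProduct_eq_sum]
  refine sum_congr rfl fun k _ => ?_
  rw [eigenvectorBasis_dotProduct_mulVec]
  ring

theorem eigenvectorBasis_dotProduct_eq_zero (hA : A.IsHermitian) {μ : ℝ} {v : ι → ℝ}
    (hv : A *ᵥ v = μ • v) {k : ι} (hk : hA.eigenvalues k ≠ μ) :
    ⇑(hA.eigenvectorBasis k) ⬝ᵥ v = 0 := by
  have h := hA.eigenvectorBasis_dotProduct_mulVec k v
  rw [hv, dotProduct_smul, smul_eq_mul] at h
  by_contra hne
  exact hk (mul_right_cancel₀ hne h).symm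

theorem eigenvalues_le_of_dotProduct_mulVec_le (hA : A.IsHermitian) {μ : ℝ}
    (h : ∀ w, w ⬝ᵥ (A *ᵥ w) ≤ μ * (w ⬝ᵥ w)) (k : ι) : hA.eigenvalues k ≤ μ := by
  have hnorm : ⇑(hA.eigenvectorBasis k) ⬝ᵥ ⇑(hA.eigenvectorBasis k) = 1 := by
    have h := real_inner_self_eq_norm_sq (hA.eigenvectorBasis k)
    rwa [hA.eigenvectorBasis.orthonormal.1 k, EuclideanSpace.inner_eq_star_dotProduct,
      star_trivial, one_pow] at h
  simpa [mulVec_eigenvectorBasis, hnorm] using h (hA.eigenvectorBasis k)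

theorem dotProduct_mulVec_le_second_eigenvalue (hA : A.IsHermitian) {n : ℕ} (hn : 1 < n)
    {s : Fin n → ℝ} (hs_anti : Antitone s) (hs : ∃ e : Fin n ≃ ι, ∀ i, s i = hA.eigenvalues (e i))
    {μ : ℝ} (hμ : ∀ k, hA.eigenvalues k ≤ μ) {v : ι → ℝ} (hv₀ : v ≠ 0) (hv : A *ᵥ v = μ • v)
    {w : ι → ℝ} (hw : w ⬝ᵥ v = 0) :
    w ⬝ᵥ (A *ᵥ w) ≤ s ⟨1, hn⟩ * (w ⬝ᵥ w) := by
  obtain ⟨e, he⟩ := hs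
  set b := hA.eigenvectorBasis
  set k₀ := e ⟨0, by omega⟩
  have hle : ∀ k ≠ k₀, hA.eigenvalues k ≤ s ⟨1, hn⟩ := by
    intro k hk
    have hpos : e.symm k ≠ ⟨0, by omega⟩ := fun h => hk (by rw [← e.apply_symm_apply k, h])
    rw [← e.apply_symm_apply k, ← he]
    exact hs_anti (Fin.le_def.2 (Nat.one_le_iff_ne_zero.2 (Fin.val_ne_iff.2 hpos)))
  have htop : hA.eigenvalues k₀ * (⇑(b k₀) ⬝ᵥ w) ^ 2 ≤ s ⟨1, hn⟩ * (⇑(b k₀) ⬝ᵥ w) ^ 2 := by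
    by_cases hgap : hA.eigenvalues k₀ ≤ s ⟨1, hn⟩
    · exact mul_le_mul_of_nonneg_right hgap (sq_nonneg _)
    -- otherwise the `μ`-eigenspace is spanned by `b k₀`, so `w ⊥ v` forces `b k₀ ⊥ w`
    have hv_coord : ∀ z, z ⬝ᵥ v = (⇑(b k₀) ⬝ᵥ z) * (⇑(b k₀) ⬝ᵥ v) := by
      intro z
      refine (b.dotProduct_eq_sum z v).trans (sum_eq_single k₀ (fun k _ hk => ?_) (by simp))
      rw [hA.eigenvectorBasis_dotProduct_eq_zero hv
        (by linarith [hle k hk, hμ k₀] : hA.eigenvalues k < μ).ne, mul_zero]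
    have hv_k₀ : ⇑(b k₀) ⬝ᵥ v ≠ 0 := fun h =>
      hv₀ (dotProduct_self_eq_zero.1 (by rw [hv_coord, h, mul_zero]))
    rw [hv_coord, mul_eq_zero, or_iff_left hv_k₀] at hw
    simp [hw]
  have hww : w ⬝ᵥ w = ∑ k, (⇑(b k) ⬝ᵥ w) ^ 2 := by
    rw [b.dotProduct_eq_sum]; simp only [sq]
  rw [hA.dotProduct_mulVec_eq_sum, hww, mul_sum]
  refine sum_le_sum fun k _ => ?_
  by_cases hk : k = k₀
  · rw [hk]; exact htop
  · exact mul_le_mul_of_nonneg_right (hle k hk) (sq_nonneg _)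

end Matrix.IsHermitian

section Positivity

variable {m n : Type*} [Fintype n]

theorem Matrix.mulVec_pos {B : Matrix m n ℝ} (hB : ∀ i j, 0 ≤ B i j)
    (hrow : ∀ i, ∃ j, B i j ≠ 0) {x : n → ℝ} (hx : ∀ j, 0 < x j) (i : m) : 0 < (B *ᵥ x) i :=
  let ⟨j, hj⟩ := hrow i
  sum_pos' (fun j _ => mul_nonneg (hB i j) (hx j).le)
    ⟨j, mem_univ j, mul_pos ((hB i j).lt_of_ne' hj) (hx j)⟩

theorem Matrix.pos_of_mulVec_eq_mul {B : Matrix m n ℝ}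
    (hB : ∀ i j, 0 ≤ B i j) (hrow : ∀ i, ∃ j, B i j ≠ 0) {x : n → ℝ} (hx : ∀ j, 0 < x j)
    {r y : m → ℝ} (hy : ∀ i, 0 < y i) (h : B *ᵥ x = r * y) (i : m) : 0 < r i := by
  have hpos := B.mulVec_pos hB hrow hx i
  rw [h] at hpos
  exact pos_of_mul_pos_left hpos (hy i).le

end Positivity

variable {m n : Type*} [Fintype m] [Fintype n]

theorem Matrix.schur_test {M : Matrix m n ℝ} (hM : ∀ i j, 0 ≤ M i j) {u : m → ℝ} {v : n → ℝ}
    (hv : ∀ j, 0 < v j) (hMv : M *ᵥ v = u) (huM : u ᵥ* M = v) (w : n → ℝ) :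
    (M *ᵥ w) ⬝ᵥ (M *ᵥ w) ≤ w ⬝ᵥ w := by
  set q : n → ℝ := fun j => w j ^ 2 / v j
  -- Cauchy–Schwarz in each row, with weights `M i j * v j`
  have hrow : ∀ i, (M *ᵥ w) i * (M *ᵥ w) i ≤ u i * (M *ᵥ q) i := fun i => by
    rw [← hMv, ← sq]
    refine sum_sq_le_sum_mul_sum_of_sq_le_mul _ (fun j _ => mul_nonneg (hM i j) (hv j).le)
      (fun j _ => mul_nonneg (hM i j) (div_nonneg (sq_nonneg _) (hv j).le)) fun j _ => ?_
    rw [show M i j * v j * (M i j * q j) = (M i j * w j) ^ 2 by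
      simp only [q]; field_simp [(hv j).ne']]
  calc (M *ᵥ w) ⬝ᵥ (M *ᵥ w) ≤ u ⬝ᵥ (M *ᵥ q) := sum_le_sum fun i _ => hrow i
    _ = w ⬝ᵥ w := by
      rw [dotProduct_mulVec, huM]
      refine sum_congr rfl fun j _ => ?_
      simp only [q]; field_simp [(hv j).ne']

section Projection

variable {K : Type*} [Field K] [LinearOrder K] [IsStrictOrderedRing K]

theorem sub_proj_dotProduct_eq_zero (a u : m → K) :
    (a - (a ⬝ᵥ u / (u ⬝ᵥ u)) • u) ⬝ᵥ u = 0 := by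
  rcases eq_or_ne u 0 with rfl | hu
  · simp
  have : u ⬝ᵥ u ≠ 0 := fun h => hu (dotProduct_self_eq_zero.1 h)
  rw [sub_dotProduct, smul_dotProduct, smul_eq_mul, div_mul_cancel₀ _ this, sub_self]

theorem sub_proj_dotProduct_self (a u : m → K) :
    (a - (a ⬝ᵥ u / (u ⬝ᵥ u)) • u) ⬝ᵥ (a - (a ⬝ᵥ u / (u ⬝ᵥ u)) • u) =
      a ⬝ᵥ a - (a ⬝ᵥ u) ^ 2 / (u ⬝ᵥ u) := by
  rw [dotProduct_sub, dotProduct_smul, sub_proj_dotProduct_eq_zero, smul_zero, sub_zero,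
    sub_dotProduct, smul_dotProduct, smul_eq_mul, dotProduct_comm u a]
  ring

end Projection

theorem dotProduct_self_nonneg (a : m → ℝ) : 0 ≤ a ⬝ᵥ a :=
  sum_nonneg fun i _ => mul_self_nonneg (a i)

theorem sq_dotProduct_le (a b : m → ℝ) : (a ⬝ᵥ b) ^ 2 ≤ (a ⬝ᵥ a) * (b ⬝ᵥ b) := by
  simpa only [dotProduct, sq] using sum_mul_sq_le_sq_mul_sq univ a b

theorem Matrix.abs_dotProduct_mulVec_sub_le {M : Matrix m n ℝ} {u : m → ℝ} {v : n → ℝ}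
    (hMv : M *ᵥ v = u) (huM : u ᵥ* M = v) {μ : ℝ}
    (hgap : ∀ g, g ⬝ᵥ v = 0 → (M *ᵥ g) ⬝ᵥ (M *ᵥ g) ≤ μ * (g ⬝ᵥ g)) (f : m → ℝ) (g : n → ℝ) :
    |f ⬝ᵥ (M *ᵥ g) - (f ⬝ᵥ u) * (v ⬝ᵥ g) / (u ⬝ᵥ u)| ≤
      √μ * √((f ⬝ᵥ f - (f ⬝ᵥ u) ^ 2 / (u ⬝ᵥ u)) * (g ⬝ᵥ g - (v ⬝ᵥ g) ^ 2 / (u ⬝ᵥ u))) := by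
  have hvv : v ⬝ᵥ v = u ⬝ᵥ u := by nth_rw 1 [← huM]; rw [← dotProduct_mulVec, hMv]
  set f' := f - (f ⬝ᵥ u / (u ⬝ᵥ u)) • u
  set g' := g - (g ⬝ᵥ v / (v ⬝ᵥ v)) • v
  have hcentre : f ⬝ᵥ (M *ᵥ g) - (f ⬝ᵥ u) * (v ⬝ᵥ g) / (u ⬝ᵥ u) = f' ⬝ᵥ (M *ᵥ g') := by
    have huMg : u ⬝ᵥ (M *ᵥ g) = v ⬝ᵥ g := by rw [dotProduct_mulVec, huM]
    rw [mulVec_sub, mulVec_smul, hMv, dotProduct_sub, sub_dotProduct, sub_dotProduct,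
      dotProduct_smul, smul_dotProduct, smul_dotProduct, dotProduct_smul, huMg, hvv,
      dotProduct_comm g v]
    rcases eq_or_ne (u ⬝ᵥ u) 0 with h | h
    · simp [h]
    · simp only [smul_eq_mul]; field_simp; ring
  have hf' : f' ⬝ᵥ f' = f ⬝ᵥ f - (f ⬝ᵥ u) ^ 2 / (u ⬝ᵥ u) := sub_proj_dotProduct_self f u
  have hg' : g' ⬝ᵥ g' = g ⬝ᵥ g - (v ⬝ᵥ g) ^ 2 / (u ⬝ᵥ u) := by
    rw [sub_proj_dotProduct_self, hvv, dotProduct_comm g v]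
  rw [hcentre, ← hf', ← hg', ← Real.sqrt_mul' _
    (mul_nonneg (dotProduct_self_nonneg _) (dotProduct_self_nonneg _)), ← Real.sqrt_sq_eq_abs]
  refine Real.sqrt_le_sqrt ((sq_dotProduct_le _ _).trans ?_)
  calc (f' ⬝ᵥ f') * ((M *ᵥ g') ⬝ᵥ (M *ᵥ g')) ≤ (f' ⬝ᵥ f') * (μ * (g' ⬝ᵥ g')) :=
        mul_le_mul_of_nonneg_left (hgap g' (sub_proj_dotProduct_eq_zero g v))
          (dotProduct_self_nonneg _)
    _ = μ * ((f' ⬝ᵥ f') * (g' ⬝ᵥ g')) := by ring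

theorem dotProduct_transpose_mul_mulVec (M : Matrix m n ℝ) (g : n → ℝ) :
    g ⬝ᵥ ((Mᵀ * M) *ᵥ g) = (M *ᵥ g) ⬝ᵥ (M *ᵥ g) := by
  rw [← mulVec_mulVec, dotProduct_mulVec, vecMul_transpose]

section Diagonal

variable {α : Type*} [NonUnitalNonAssocSemiring α] [DecidableEq m]

theorem Matrix.IsDiag.mulVec_eq {R : Matrix m m α} (hR : R.IsDiag) (y : m → α) :
    R *ᵥ y = R.diag * y := by
  ext i
  conv_lhs => rw [← hR.diagonal_diag]
  exact mulVec_diagonal _ _ _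

theorem Matrix.IsDiag.vecMul_eq {R : Matrix m m α} (hR : R.IsDiag) (y : m → α) :
    y ᵥ* R = y * R.diag := by
  ext i
  conv_lhs => rw [← hR.diagonal_diag]
  exact vecMul_diagonal _ _ _

end Diagonal

section InvSqrtScale

variable [DecidableEq m] [DecidableEq n]

theorem sqrt_mul_indicator_dotProduct_self {r : m → ℝ} (hr : ∀ i, 0 ≤ r i) (S : Finset m) :
    (fun i => √(r i) * if i ∈ S then (1 : ℝ) else 0) ⬝ᵥ
      (fun i => √(r i) * if i ∈ S then (1 : ℝ) else 0) = ∑ i ∈ S, r i := by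
  simp [dotProduct, Real.mul_self_sqrt (hr _)]

noncomputable def Matrix.invSqrtScale (B : Matrix m n ℝ) (r : m → ℝ) (c : n → ℝ) :
    Matrix m n ℝ :=
  diagonal (fun i => (√(r i))⁻¹) * B * diagonal (fun j => (√(c j))⁻¹)

variable (B : Matrix m n ℝ) {r : m → ℝ} {c : n → ℝ}

theorem Matrix.invSqrtScale_apply (i : m) (j : n) :
    B.invSqrtScale r c i j = (√(r i))⁻¹ * B i j * (√(c j))⁻¹ := by
  simp [invSqrtScale, diagonal_mul, mul_diagonal]

theorem Matrix.transpose_invSqrtScale : (B.invSqrtScale r c)ᵀ = Bᵀ.invSqrtScale c r := by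
  ext j i
  simp only [transpose_apply, invSqrtScale_apply]
  ring

theorem Matrix.invSqrtScale_nonneg (hB : ∀ i j, 0 ≤ B i j) (i : m) (j : n) :
    0 ≤ B.invSqrtScale r c i j := by
  rw [invSqrtScale_apply]
  have := hB i j
  positivity

theorem Matrix.dotProduct_mulVec_eq_invSqrtScale (hr : ∀ i, 0 < r i) (hc : ∀ j, 0 < c j)
    (p : m → ℝ) (q : n → ℝ) :
    p ⬝ᵥ (B *ᵥ q) =
      (fun i => √(r i) * p i) ⬝ᵥ (B.invSqrtScale r c *ᵥ fun j => √(c j) * q j) := by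
  simp only [dotProduct, mulVec, mul_sum, invSqrtScale_apply]
  refine sum_congr rfl fun i _ => sum_congr rfl fun j _ => ?_
  field_simp [(Real.sqrt_pos.2 (hr i)).ne', (Real.sqrt_pos.2 (hc j)).ne']

theorem Matrix.invSqrtScale_mulVec (hc : ∀ j, 0 < c j) {x : n → ℝ} {y : m → ℝ}
    (h : B *ᵥ x = r * y) :
    B.invSqrtScale r c *ᵥ (fun j => √(c j) * x j) = fun i => √(r i) * y i := by
  ext i
  have hi : ∑ j, B i j * x j = r i * y i := congrFun h i
  calc ∑ j, B.invSqrtScale r c i j * (√(c j) * x j) = (√(r i))⁻¹ * (r i * y i) := by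
        rw [← hi, mul_sum]
        refine sum_congr rfl fun j _ => ?_
        rw [invSqrtScale_apply]
        field_simp [(Real.sqrt_pos.2 (hc j)).ne']
    _ = √(r i) * y i := by rw [← mul_assoc, inv_mul_eq_div, Real.div_sqrt]

theorem Matrix.vecMul_invSqrtScale (hr : ∀ i, 0 < r i) {x : n → ℝ} {y : m → ℝ}
    (h : Bᵀ *ᵥ y = c * x) :
    (fun i => √(r i) * y i) ᵥ* B.invSqrtScale r c = fun j => √(c j) * x j := by
  rw [← mulVec_transpose, transpose_invSqrtScale]
  exact Bᵀ.invSqrtScale_mulVec hr h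

end InvSqrtScale

/-- **General Expander Mixing Lemma for nonnegative matrices** (Theorem 8 of the paper). -/
theorem matrix_expander_mixing {m n : ℕ} (hn : 2 ≤ n)
    (B : Matrix (Fin m) (Fin n) ℝ)
    (hBnn : ∀ i j, 0 ≤ B i j)
    (hrow : ∀ i, ∃ j, B i j ≠ 0) (hcol : ∀ j, ∃ i, B i j ≠ 0)
    (x : Fin n → ℝ) (y : Fin m → ℝ) (hx : ∀ j, 0 < x j) (hy : ∀ i, 0 < y i)
    (R : Matrix (Fin m) (Fin m) ℝ) (C : Matrix (Fin n) (Fin n) ℝ)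
    (hR : R.IsDiag) (hC : C.IsDiag)
    (hRdef : B *ᵥ x = R *ᵥ y) (hCdef : y ᵥ* B = x ᵥ* C)
    (M : Matrix (Fin m) (Fin n) ℝ)
    (hM : M = (Matrix.diagonal fun i => (Real.sqrt (R i i))⁻¹) * B *
        (Matrix.diagonal fun j => (Real.sqrt (C j j))⁻¹))
    (hMM : (Mᵀ * M).IsHermitian)
    -- `s` lists the eigenvalues of `MᵀM` in nonincreasing order, so that
    -- `Real.sqrt (s ⟨1,_⟩)` is the second largest singular value of `M`.
    (s : Fin n → ℝ) (hsmono : Antitone s)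
    (hs : ∃ e : Fin n ≃ Fin n, ∀ i, s i = hMM.eigenvalues (e i))
    (S : Finset (Fin m)) (T : Finset (Fin n)) :
    |(fun i => if i ∈ S then (1 : ℝ) else 0) ⬝ᵥ
        (B *ᵥ fun j => if j ∈ T then (1 : ℝ) else 0)
      - ((fun i => if i ∈ S then (1 : ℝ) else 0) ⬝ᵥ (B *ᵥ x)) *
          (y ⬝ᵥ (B *ᵥ fun j => if j ∈ T then (1 : ℝ) else 0)) / (y ⬝ᵥ (B *ᵥ x))|
      ≤ Real.sqrt (s ⟨1, by omega⟩) *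
        Real.sqrt
          (((∑ i ∈ S, R i i) -
              ((fun i => if i ∈ S then (1 : ℝ) else 0) ⬝ᵥ (B *ᵥ x)) ^ 2 / (y ⬝ᵥ (B *ᵥ x))) *
            ((∑ j ∈ T, C j j) -
              (y ⬝ᵥ (B *ᵥ fun j => if j ∈ T then (1 : ℝ) else 0)) ^ 2 / (y ⬝ᵥ (B *ᵥ x)))) := by
  have hBx : B *ᵥ x = (fun i => R i i) * y := hRdef.trans (hR.mulVec_eq y)
  have hyB : Bᵀ *ᵥ y = (fun j => C j j) * x := by
    rw [mulVec_transpose, hCdef, hC.vecMul_eq, mul_comm]; rfl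
  have hr : ∀ i, 0 < R i i := B.pos_of_mulVec_eq_mul hBnn hrow hx hy hBx
  have hc : ∀ j, 0 < C j j := Bᵀ.pos_of_mulVec_eq_mul (fun j i => hBnn i j) hcol hy hx hyB
  replace hM : M = B.invSqrtScale (fun i => R i i) (fun j => C j j) := hM
  have hscale := B.dotProduct_mulVec_eq_invSqrtScale hr hc
  rw [hscale, hscale, hscale _ x, hscale y, ← hM,
    ← sqrt_mul_indicator_dotProduct_self (fun i => (hr i).le) S,
    ← sqrt_mul_indicator_dotProduct_self (fun j => (hc j).le) T]
  set u : Fin m → ℝ := fun i => √(R i i) * y i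
  set v : Fin n → ℝ := fun j => √(C j j) * x j
  have hMv : M *ᵥ v = u := by rw [hM]; exact B.invSqrtScale_mulVec hc hBx
  have huM : u ᵥ* M = v := by rw [hM]; exact B.vecMul_invSqrtScale hr hyB
  have hv : ∀ j, 0 < v j := fun j => mul_pos (Real.sqrt_pos.2 (hc j)) (hx j)
  have hMM_le : ∀ k, hMM.eigenvalues k ≤ 1 := hMM.eigenvalues_le_of_dotProduct_mulVec_le fun w => by
    rw [dotProduct_transpose_mul_mulVec, one_mul]
    exact schur_test (hM ▸ B.invSqrtScale_nonneg hBnn) hv hMv huM w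
  have hMMv : (Mᵀ * M) *ᵥ v = (1 : ℝ) • v := by
    rw [← mulVec_mulVec, hMv, mulVec_transpose, huM, one_smul]
  have hgap : ∀ g, g ⬝ᵥ v = 0 → (M *ᵥ g) ⬝ᵥ (M *ᵥ g) ≤ s ⟨1, by omega⟩ * (g ⬝ᵥ g) := fun g hg =>
    dotProduct_transpose_mul_mulVec M g ▸ hMM.dotProduct_mulVec_le_second_eigenvalue hn hsmono hs
      hMM_le (fun h => (hv ⟨0, by omega⟩).ne' (congrFun h _)) hMMv hg
  rw [hMv, dotProduct_mulVec u M, huM]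
  exact M.abs_dotProduct_mulVec_sub_le hMv huM hgap _ _
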